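/- Let d ≥ 1, let σ be a permutation of {1,…,d}, and let U be a d×d complex special unitary matrix (unitary with det(U) = 1). Then U can be written as a product of at most d(d−1)/2 P-unitary matrices each having determinant 1; that is, there exist m ≤ d(d−1)/2 unitary matrices A_1,…,A_m with U = A_1 ⋯ A_m such that each A_i has det(A_i) = 1 and agrees with the identity matrix in every entry outside the 2×2 principal submatrix with row and column indices σ(k_i) and σ(k_i + 1) for some k_i ∈ {1,…,d−1}. -/

import Mathlib

/-!
Givens elimination along the chain `σ 0, σ 1, …, σ (d-1)`. A special unitary `2 × 2` rotation
acting on a consecutive pair `(σ k, σ (k+1))` can kill the entry `σ (k+1)` of a vector while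
making its entry `σ k` real and nonnegative. Sweeping such rotations from the bottom of the
chain to the top turns the column `σ 0` of `U` into a unit vector supported on `σ 0` with a
nonnegative real entry, that is, into the basis vector; for a unitary matrix this forces the
row `σ 0` to be trivial as well, and one recurses on the shorter chain `σ 1, …, σ (d-1)`. This
uses `(d-1) + (d-2) + ⋯ + 1 = d(d-1)/2` rotations, and what remains when the chain has length
one is the identity because the determinant is `1`.
-/

/-- `A` agrees with the identity matrix in every entry outside the 2×2 principal
submatrix with row and column indices `p` and `q` (a "two-level" pattern). -/
def IsTwoLevelOn {ι R : Type*} [DecidableEq ι] [Zero R] [One R]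
    (A : Matrix ι ι R) (p q : ι) : Prop :=
  ∀ i j, (i ≠ p ∧ i ≠ q) ∨ (j ≠ p ∧ j ≠ q) → A i j = if i = j then 1 else 0

open Matrix ComplexConjugate

variable {ι : Type*} [DecidableEq ι]

namespace IsTwoLevelOn

variable {R : Type*} {G : Matrix ι ι R} {p q i : ι}

theorem mulVec_apply_of_ne [Fintype ι] [NonAssocSemiring R] (hG : IsTwoLevelOn G p q)
    (hp : i ≠ p) (hq : i ≠ q) (v : ι → R) : (G *ᵥ v) i = v i := by
  have hrow : G i = Pi.single i 1 := funext fun j => by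
    simp [hG i j (.inl ⟨hp, hq⟩), Pi.single_apply, eq_comm]
  rw [mulVec, hrow, single_one_dotProduct]

theorem mulVec_single_of_ne [Fintype ι] [NonAssocSemiring R] (hG : IsTwoLevelOn G p q)
    (hp : i ≠ p) (hq : i ≠ q) : G *ᵥ Pi.single i 1 = Pi.single i 1 := by
  ext j
  rw [mulVec_single_one, col_apply, hG j i (.inr ⟨hp, hq⟩), Pi.single_apply]

theorem star [Semiring R] [StarRing R] (hG : IsTwoLevelOn G p q) :
    IsTwoLevelOn (star G) p q := fun i j hij => by
  rw [star_apply, hG j i hij.symm]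
  by_cases h : i = j
  · simp [h]
  · simp [h, Ne.symm h]

end IsTwoLevelOn

def twoLevelEquiv {p q : ι} (hpq : p ≠ q) : Fin 2 ⊕ {i // i ≠ p ∧ i ≠ q} ≃ ι where
  toFun := Sum.elim ![p, q] Subtype.val
  invFun i := if h : i = p then .inl 0 else if h' : i = q then .inl 1 else .inr ⟨i, h, h'⟩
  left_inv := by
    rintro (t | ⟨i, h, h'⟩)
    · fin_cases t <;> simp [hpq.symm]
    · simp [h, h']
  right_inv i := by
    by_cases h : i = p
    · simp [h]
    · by_cases h' : i = q <;> simp [h, h', hpq.symm]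

theorem twoLevelEquiv_symm_apply_of_ne {p q i : ι} (hpq : p ≠ q) (hp : i ≠ p) (hq : i ≠ q) :
    (twoLevelEquiv hpq).symm i = .inr ⟨i, hp, hq⟩ :=
  (Equiv.symm_apply_eq _).2 rfl

def twoLevel {R : Type*} [Zero R] [One R] {p q : ι} (hpq : p ≠ q)
    (M : Matrix (Fin 2) (Fin 2) R) : Matrix ι ι R :=
  reindex (twoLevelEquiv hpq) (twoLevelEquiv hpq) (fromBlocks M 0 0 1)

section twoLevel

variable {R : Type*} {p q : ι} (hpq : p ≠ q)

theorem isTwoLevelOn_twoLevel [Zero R] [One R] (M : Matrix (Fin 2) (Fin 2) R) :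
    IsTwoLevelOn (twoLevel hpq M) p q := by
  have hblock : ∀ a b : Fin 2 ⊕ {i // i ≠ p ∧ i ≠ q}, (∃ k, a = .inr k) ∨ (∃ k, b = .inr k) →
      fromBlocks M 0 0 1 a b = if a = b then 1 else 0 := by
    rintro (s | k) (t | l) h <;> simp_all [one_apply]
  intro i j hij
  rw [twoLevel, reindex_apply, submatrix_apply, hblock]
  · simp only [Equiv.apply_eq_iff_eq]
  exact hij.imp (fun ⟨hp, hq⟩ => ⟨_, twoLevelEquiv_symm_apply_of_ne hpq hp hq⟩)
    (fun ⟨hp, hq⟩ => ⟨_, twoLevelEquiv_symm_apply_of_ne hpq hp hq⟩)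

theorem twoLevel_mulVec_apply [Fintype ι] [NonAssocSemiring R] (M : Matrix (Fin 2) (Fin 2) R)
    (v : ι → R) (t : Fin 2) : (twoLevel hpq M *ᵥ v) (![p, q] t) = (M *ᵥ ![v p, v q]) t := by
  rw [twoLevel, reindex_apply, submatrix_mulVec_equiv, Equiv.symm_symm, Function.comp_apply,
    show ![p, q] t = twoLevelEquiv hpq (.inl t) from rfl, Equiv.symm_apply_apply,
    fromBlocks_mulVec]
  simp only [Sum.elim_inl, zero_mulVec, add_zero]
  congr
  ext s
  fin_cases s <;> rfl

theorem twoLevel_mem_specialUnitaryGroup [Fintype ι] [CommRing R] [StarRing R]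
    {M : Matrix (Fin 2) (Fin 2) R} (hM : M ∈ specialUnitaryGroup (Fin 2) R) :
    twoLevel hpq M ∈ specialUnitaryGroup ι R := by
  rw [mem_specialUnitaryGroup_iff, mem_unitaryGroup_iff] at hM ⊢
  refine ⟨?_, ?_⟩
  · rw [twoLevel, star_eq_conjTranspose, conjTranspose_reindex, reindex_apply, reindex_apply,
      submatrix_mul_equiv, fromBlocks_conjTranspose, fromBlocks_multiply, ← star_eq_conjTranspose,
      hM.1]
    simp [fromBlocks_one]
  · rw [twoLevel, det_reindex_self, det_fromBlocks_zero₂₁, det_one, mul_one, hM.2]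

end twoLevel

theorem exists_mem_specialUnitaryGroup_fin_two_mulVec_eq {𝕜 : Type*} [RCLike 𝕜] (a b : 𝕜) :
    ∃ M ∈ specialUnitaryGroup (Fin 2) 𝕜, ∃ r : ℝ, 0 ≤ r ∧ M *ᵥ ![a, b] = ![(r : 𝕜), 0] := by
  by_cases hab : a = 0 ∧ b = 0
  · exact ⟨1, one_mem _, 0, le_rfl, by simp [hab.1, hab.2]⟩
  set r := √(‖a‖ ^ 2 + ‖b‖ ^ 2)
  have hr : (r : 𝕜) ^ 2 = conj a * a + conj b * b := by
    rw [← RCLike.ofReal_pow, Real.sq_sqrt (by positivity), RCLike.conj_mul, RCLike.conj_mul]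
    push_cast; ring
  have hr0 : (r : 𝕜) ≠ 0 := by
    rw [RCLike.ofReal_ne_zero, Real.sqrt_ne_zero']
    by_contra! h
    exact hab ⟨norm_eq_zero.1 (by nlinarith [norm_nonneg a, norm_nonneg b]),
      norm_eq_zero.1 (by nlinarith [norm_nonneg a, norm_nonneg b])⟩
  refine ⟨(r : 𝕜)⁻¹ • !![conj a, conj b; -b, a], ?_, r, Real.sqrt_nonneg _, ?_⟩
  · rw [mem_specialUnitaryGroup_iff, mem_unitaryGroup_iff]
    refine ⟨?_, ?_⟩
    · ext i j
      fin_cases i <;> fin_cases j <;> simp [mul_apply, Fin.sum_univ_two] <;> field_simp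
      · linear_combination -hr
      · ring
      · ring
      · linear_combination -hr
    · simp only [det_smul, det_fin_two_of, Fintype.card_fin]
      field_simp
      linear_combination -hr
  · ext i
    fin_cases i <;> simp [mulVec, dotProduct, Fin.sum_univ_two] <;> field_simp
    · linear_combination -hr
    · ring

theorem exists_mem_specialUnitaryGroup_isTwoLevelOn_mulVec [Fintype ι] {𝕜 : Type*} [RCLike 𝕜]
    {p q : ι} (hpq : p ≠ q) (v : ι → 𝕜) :
    ∃ G ∈ specialUnitaryGroup ι 𝕜, IsTwoLevelOn G p q ∧
      ∃ r : ℝ, 0 ≤ r ∧ (G *ᵥ v) p = r ∧ (G *ᵥ v) q = 0 := by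
  obtain ⟨M, hM, r, hr, hMv⟩ := exists_mem_specialUnitaryGroup_fin_two_mulVec_eq (v p) (v q)
  refine ⟨twoLevel hpq M, twoLevel_mem_specialUnitaryGroup hpq hM, isTwoLevelOn_twoLevel hpq M,
    r, hr, ?_, ?_⟩
  · simpa [hMv] using twoLevel_mulVec_apply hpq M v 0
  · simpa [hMv] using twoLevel_mulVec_apply hpq M v 1

theorem star_list_prod {M : Type*} [Monoid M] [StarMul M] (L : List M) :
    star L.prod = (L.map star).reverse.prod := by
  induction L with
  | nil => simp
  | cons A L ih => simp [ih]

section Unitary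

variable [Fintype ι]

theorem star_mem_specialUnitaryGroup {R : Type*} [CommRing R] [StarRing R] {A : Matrix ι ι R}
    (hA : A ∈ specialUnitaryGroup ι R) : star A ∈ specialUnitaryGroup ι R :=
  (star (⟨A, hA⟩ : specialUnitaryGroup ι R)).2

theorem apply_eq_zero_of_mulVec_single {R : Type*} [CommRing R] [StarRing R]
    {U : Matrix ι ι R} (hU : U ∈ unitaryGroup ι R) {i j : ι}
    (h : U *ᵥ Pi.single i 1 = Pi.single i 1) (hij : i ≠ j) : U i j = 0 := by
  have hstar : star U *ᵥ Pi.single i 1 = Pi.single i 1 := by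
    rw [← h, mulVec_mulVec, Unitary.star_mul_self_of_mem hU, one_mulVec, h]
  have := congrFun hstar j
  rwa [mulVec_single_one, col_apply, star_apply, Pi.single_eq_of_ne hij.symm, star_eq_zero] at this

theorem mulVec_single_eq_single_of_apply_eq_zero {𝕜 : Type*} [RCLike 𝕜] {U : Matrix ι ι 𝕜}
    (hU : U ∈ unitaryGroup ι 𝕜) {c : ι} (hcol : ∀ i ≠ c, U i c = 0) {r : ℝ} (hr : 0 ≤ r)
    (hc : U c c = r) : U *ᵥ Pi.single c 1 = Pi.single c 1 := by
  have hnorm : (star U * U) c c = 1 := by rw [Unitary.star_mul_self_of_mem hU, one_apply_eq]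
  rw [mul_apply, Finset.sum_eq_single c (fun i _ hi => by rw [hcol i hi, mul_zero]) (by simp),
    star_apply, hc, RCLike.star_def, RCLike.conj_ofReal, ← RCLike.ofReal_mul,
    ← RCLike.ofReal_one, RCLike.ofReal_inj] at hnorm
  have hr1 : r = 1 := by nlinarith
  ext i
  rw [mulVec_single_one, col_apply]
  by_cases hi : i = c
  · rw [hi, hc, hr1, Pi.single_eq_same, RCLike.ofReal_one]
  · rw [hcol i hi, Pi.single_eq_of_ne hi]

theorem eq_one_of_mulVec_single_of_ne {R : Type*} [CommRing R] [StarRing R]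
    {U : Matrix ι ι R} (hU : U ∈ specialUnitaryGroup ι R) (c : ι)
    (h : ∀ i ≠ c, U *ᵥ Pi.single i 1 = Pi.single i 1) : U = 1 := by
  rw [mem_specialUnitaryGroup_iff] at hU
  have hcol : ∀ x y, y ≠ c → U x y = (1 : Matrix ι ι R) x y := fun x y hy => by
    rw [← col_apply U y x, ← mulVec_single_one, h y hy, one_apply, Pi.single_apply]
  have hdiag : U.IsDiag := fun x y hxy => by
    change U x y = 0
    by_cases hy : y = c
    · subst hy
      exact apply_eq_zero_of_mulVec_single hU.1 (h x hxy) hxy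
    · rw [hcol x y hy, one_apply_ne hxy]
  have hdet : U.det = U c c := by
    conv_lhs => rw [← hdiag.diagonal_diag, det_diagonal]
    exact Finset.prod_eq_single c (fun i _ hi => by rw [diag_apply, hcol i i hi, one_apply_eq])
      (by simp)
  ext x y
  by_cases hy : y = c
  · by_cases hx : x = c
    · rw [hx, hy, one_apply_eq, ← hdet, hU.2]
    · rw [hdiag (by rwa [hy]), one_apply_ne (by rwa [hy])]
  · exact hcol x y hy

end Unitary

-- For `e = σ` this is the paper's `P`-unitary pattern of type `k + 1` (indices here start at 0).
def IsTwoLevelOnAdjacent {R : Type*} [Zero R] [One R] {n : ℕ} (e : Fin (n + 1) → ι)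
    (A : Matrix ι ι R) : Prop :=
  ∃ k : Fin n, IsTwoLevelOn A (e k.castSucc) (e k.succ)

namespace IsTwoLevelOnAdjacent

variable {R : Type*} {n : ℕ} {A : Matrix ι ι R}

theorem of_tail [Zero R] [One R] {e : Fin (n + 2) → ι}
    (h : IsTwoLevelOnAdjacent (Fin.tail e) A) : IsTwoLevelOnAdjacent e A :=
  let ⟨k, hk⟩ := h
  ⟨k.succ, hk⟩

theorem star [Semiring R] [StarRing R] {e : Fin (n + 1) → ι} (h : IsTwoLevelOnAdjacent e A) :
    IsTwoLevelOnAdjacent e (star A) :=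
  let ⟨k, hk⟩ := h
  ⟨k, hk.star⟩

theorem mulVec_single [Fintype ι] [NonAssocSemiring R] {e : Fin (n + 1) → ι}
    (h : IsTwoLevelOnAdjacent e A) {i : ι} (hi : i ∉ Set.range e) :
    A *ᵥ Pi.single i 1 = Pi.single i 1 :=
  let ⟨_, hk⟩ := h
  hk.mulVec_single_of_ne (fun h => hi ⟨_, h.symm⟩) (fun h => hi ⟨_, h.symm⟩)

end IsTwoLevelOnAdjacent

section Chain

variable [Fintype ι] {𝕜 : Type*} [RCLike 𝕜]

theorem exists_list_prod_mulVec_apply_eq_zero {n : ℕ} (e : Fin (n + 2) → ι)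
    (he : Function.Injective e) (v : ι → 𝕜) :
    ∃ L : List (Matrix ι ι 𝕜), L.length = n + 1 ∧
      (∀ A ∈ L, A ∈ specialUnitaryGroup ι 𝕜 ∧ IsTwoLevelOnAdjacent e A) ∧
      (∀ k : Fin (n + 1), (L.prod *ᵥ v) (e k.succ) = 0) ∧
      ∃ r : ℝ, 0 ≤ r ∧ (L.prod *ᵥ v) (e 0) = r := by
  induction n with
  | zero =>
    obtain ⟨G, hG, hGe, r, hr, hG0, hG1⟩ :=
      exists_mem_specialUnitaryGroup_isTwoLevelOn_mulVec (he.ne Fin.zero_ne_one) v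
    refine ⟨[G], rfl, ?_, ?_, r, hr, by simpa using hG0⟩
    · simpa using ⟨hG, 0, hGe⟩
    · intro k
      simpa [Fin.fin_one_eq_zero k] using hG1
  | succ n ih =>
    obtain ⟨L, hlen, hL, hzero, -⟩ := ih (Fin.tail e) (he.comp (Fin.succ_injective _))
    obtain ⟨G, hG, hGe, r, hr, hG0, hG1⟩ :=
      exists_mem_specialUnitaryGroup_isTwoLevelOn_mulVec (he.ne Fin.zero_ne_one) (L.prod *ᵥ v)
    refine ⟨G :: L, by simp [hlen], ?_, ?_, r, hr, by simpa [mulVec_mulVec] using hG0⟩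
    · simp only [List.mem_cons, forall_eq_or_imp]
      exact ⟨⟨hG, 0, hGe⟩, fun A hA => ⟨(hL A hA).1, (hL A hA).2.of_tail⟩⟩
    · intro k
      rw [List.prod_cons, ← mulVec_mulVec]
      cases k using Fin.cases with
      | zero => exact hG1
      | succ k =>
        rw [hGe.mulVec_apply_of_ne (he.ne (Fin.succ_ne_zero _)) (he.ne (Fin.succ_succ_ne_one k))]
        exact hzero k

theorem exists_list_prod_mul_mulVec_single_eq {n : ℕ} (e : Fin (n + 2) → ι)
    (he : Function.Injective e) {U : Matrix ι ι 𝕜} (hU : U ∈ specialUnitaryGroup ι 𝕜)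
    (hfix : ∀ i ∉ Set.range e, U *ᵥ Pi.single i 1 = Pi.single i 1) :
    ∃ L : List (Matrix ι ι 𝕜), L.length = n + 1 ∧
      (∀ A ∈ L, A ∈ specialUnitaryGroup ι 𝕜 ∧ IsTwoLevelOnAdjacent e A) ∧
      ∀ i ∉ Set.range (Fin.tail e), (L.prod * U) *ᵥ Pi.single i 1 = Pi.single i 1 := by
  obtain ⟨L, hlen, hL, hzero, r, hr, hreal⟩ :=
    exists_list_prod_mulVec_apply_eq_zero e he (U *ᵥ Pi.single (e 0) 1)
  refine ⟨L, hlen, hL, ?_⟩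
  set V := L.prod * U
  have hV : V ∈ specialUnitaryGroup ι 𝕜 :=
    mul_mem (Submonoid.list_prod_mem _ fun A hA => (hL A hA).1) hU
  have hVcol : V *ᵥ Pi.single (e 0) 1 = L.prod *ᵥ (U *ᵥ Pi.single (e 0) 1) := by
    rw [mulVec_mulVec]
  have hVfix : ∀ i ∉ Set.range e, V *ᵥ Pi.single i 1 = Pi.single i 1 := fun i hi => by
    have : L.prod ∈ MulAction.stabilizerSubmonoid (Matrix ι ι 𝕜) (Pi.single i 1 : ι → 𝕜) :=
      Submonoid.list_prod_mem _ fun A hA =>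
        MulAction.mem_stabilizerSubmonoid_iff.2 ((hL A hA).2.mulVec_single hi)
    rw [← mulVec_mulVec, hfix i hi]
    exact MulAction.mem_stabilizerSubmonoid_iff.1 this
  have hV0 : V *ᵥ Pi.single (e 0) 1 = Pi.single (e 0) 1 := by
    refine mulVec_single_eq_single_of_apply_eq_zero hV.1 (fun i hi => ?_) hr ?_
    · by_cases hie : i ∈ Set.range e
      · obtain ⟨k, rfl⟩ := hie
        obtain ⟨k, rfl⟩ := Fin.exists_succ_eq.2 (fun h => hi (congrArg e h))
        rw [← col_apply V, ← mulVec_single_one, hVcol, hzero k]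
      · exact apply_eq_zero_of_mulVec_single hV.1 (hVfix i hie) hi
    · rw [← col_apply V, ← mulVec_single_one, hVcol, hreal]
  intro i hi
  by_cases hi0 : i = e 0
  · rw [hi0, hV0]
  · refine hVfix i fun ⟨k, hk⟩ => ?_
    cases k using Fin.cases with
    | zero => exact hi0 hk.symm
    | succ k => exact hi ⟨k, hk⟩

theorem exists_list_prod_eq_of_mulVec_single {n : ℕ} (e : Fin (n + 1) → ι)
    (he : Function.Injective e) {U : Matrix ι ι 𝕜} (hU : U ∈ specialUnitaryGroup ι 𝕜)
    (hfix : ∀ i ∉ Set.range e, U *ᵥ Pi.single i 1 = Pi.single i 1) :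
    ∃ L : List (Matrix ι ι 𝕜), L.length = (n + 1).choose 2 ∧ U = L.prod ∧
      ∀ A ∈ L, A ∈ specialUnitaryGroup ι 𝕜 ∧ IsTwoLevelOnAdjacent e A := by
  induction n generalizing U with
  | zero =>
    refine ⟨[], rfl, eq_one_of_mulVec_single_of_ne hU (e 0) fun i hi => hfix i ?_, by simp⟩
    rintro ⟨k, rfl⟩
    exact hi (congrArg e (Fin.fin_one_eq_zero k))
  | succ n ih =>
    obtain ⟨L₁, hlen₁, hL₁, hfix₁⟩ := exists_list_prod_mul_mulVec_single_eq e he hU hfix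
    have hL₁SU : L₁.prod ∈ specialUnitaryGroup ι 𝕜 :=
      Submonoid.list_prod_mem _ fun A hA => (hL₁ A hA).1
    obtain ⟨L₂, hlen₂, hL₂prod, hL₂⟩ :=
      ih (Fin.tail e) (he.comp (Fin.succ_injective _)) (mul_mem hL₁SU hU) hfix₁
    refine ⟨(L₁.map star).reverse ++ L₂, ?_, ?_, ?_⟩
    · simp [hlen₁, hlen₂, Nat.choose_succ_succ' (n + 1)]
    · rw [List.prod_append, ← star_list_prod, ← hL₂prod, ← mul_assoc,
        Unitary.star_mul_self_of_mem hL₁SU.1, one_mul]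
    · simp only [List.mem_append, List.mem_reverse, List.mem_map]
      rintro A (⟨B, hB, rfl⟩ | hA)
      · exact ⟨star_mem_specialUnitaryGroup (hL₁ B hB).1, (hL₁ B hB).2.star⟩
      · exact ⟨(hL₂ A hA).1, (hL₂ A hA).2.of_tail⟩

end Chain

theorem special_unitary_eq_prod_P_unitary_det_one (d : ℕ) (hd : 1 ≤ d)
    (σ : Equiv.Perm (Fin d))
    (U : Matrix (Fin d) (Fin d) ℂ) (hU : U ∈ Matrix.unitaryGroup (Fin d) ℂ)
    (hdet : U.det = 1) :
    ∃ (m : ℕ) (_ : m ≤ d * (d - 1) / 2) (A : Fin m → Matrix (Fin d) (Fin d) ℂ),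
      U = (List.ofFn A).prod ∧
      ∀ i, A i ∈ Matrix.unitaryGroup (Fin d) ℂ ∧
        (A i).det = 1 ∧
        ∃ (k : ℕ) (hk : k + 1 < d),
          IsTwoLevelOn (A i) (σ ⟨k, by omega⟩) (σ ⟨k + 1, hk⟩) := by
  obtain ⟨n, rfl⟩ : ∃ n, d = n + 1 := ⟨d - 1, by omega⟩
  obtain ⟨L, hlen, rfl, hL⟩ := exists_list_prod_eq_of_mulVec_single σ σ.injective
    (mem_specialUnitaryGroup_iff.2 ⟨hU, hdet⟩) fun i hi => (hi (σ.surjective i)).elim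
  refine ⟨L.length, by rw [hlen, Nat.choose_two_right], L.get, by rw [List.ofFn_get], fun i => ?_⟩
  obtain ⟨hSU, k, hk⟩ := hL _ (L.get_mem i)
  exact ⟨hSU.1, hSU.2, k, by omega, hk⟩
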